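/- arXiv:1210.1723 — 4 statements merged into one kernel-verified Lean document; each statement's English description precedes it below -/
import Mathlib

section
/- Let E ⊂ ℤ^d be a finite set, let a : ℤ^d × ℤ^d → [0,∞) satisfy a(x,y) > 0 only if |x−y| = 1, ∑_y a(x,y) = 1, the balance condition ∑_y a(x,y)(y−x) = 0, and the uniform ellipticity a(x,y) ≥ κ > 0 whenever |x−y|=1. Let u be a function on Ē = E ∪ ∂E, let x ∈ E with nonempty upper contact set I_u(x) = {s ∈ ℝ^d : u(x) − s·x ≥ u(z) − s·z for all z ∈ Ē}, and suppose L_a u(x) ≥ −g(x) where L_a u(x) = ∑_y a(x,y)(u(y) − u(x)) and g(x) ≥ 0. Then the Lebesgue measure of I_u(x) satisfies |I_u(x)| ≤ (2/κ)^d · g(x)^d. -/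
open MeasureTheory

/-- The `i`-th unit vector in `ℤ^d`. -/
def unitv (d : ℕ) (i : Fin d) : Fin d → ℤ := fun j => if j = i then 1 else 0

/-- Nearest neighbors in `ℤ^d` (i.e. `|x - y| = 1`). -/
def isNbr {d : ℕ} (x y : Fin d → ℤ) : Prop := (∑ j, (x j - y j).natAbs) = 1

/-- The outer lattice boundary `∂E` of a set `E ⊆ ℤ^d`. -/
def bdry {d : ℕ} (E : Set (Fin d → ℤ)) : Set (Fin d → ℤ) :=
  {y | y ∉ E ∧ ∃ x ∈ E, isNbr x y}

/-- The difference operator `L_a u (x) = ∑_y a(x,y)(u(y) - u(x))` for a nearest-neighbor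
kernel `a`. -/
noncomputable def La {d : ℕ} (a : (Fin d → ℤ) → (Fin d → ℤ) → ℝ)
    (u : (Fin d → ℤ) → ℝ) (x : Fin d → ℤ) : ℝ :=
  ∑ i : Fin d,
    (a x (x + unitv d i) * (u (x + unitv d i) - u x) +
     a x (x - unitv d i) * (u (x - unitv d i) - u x))

/-- The upper contact set `I_u(x) = {s ∈ ℝ^d : u(x) - s·x ≥ u(z) - s·z for all z ∈ Ē}`. -/
def contact {d : ℕ} (clE : Set (Fin d → ℤ)) (u : (Fin d → ℤ) → ℝ)
    (x : Fin d → ℤ) : Set (Fin d → ℝ) :=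
  {s | ∀ z ∈ clE, u z - ∑ j, s j * (z j : ℝ) ≤ u x - ∑ j, s j * (x j : ℝ)}

lemma nbr_plus {d : ℕ} (x : Fin d → ℤ) (i : Fin d) : isNbr x (x + unitv d i) := by
  unfold isNbr
  simp only [Pi.add_apply, unitv]
  have : ∀ j : Fin d, (x j - (x j + if j = i then 1 else 0)).natAbs
      = if j = i then 1 else 0 := by
    intro j; split <;> simp
  simp only [this, Finset.sum_ite_eq', Finset.mem_univ, if_true]

lemma nbr_minus {d : ℕ} (x : Fin d → ℤ) (i : Fin d) : isNbr x (x - unitv d i) := by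
  unfold isNbr
  simp only [Pi.sub_apply, unitv]
  have : ∀ j : Fin d, (x j - (x j - if j = i then 1 else 0)).natAbs
      = if j = i then 1 else 0 := by
    intro j; split <;> simp
  simp only [this, Finset.sum_ite_eq', Finset.mem_univ, if_true]

lemma sum_plus {d : ℕ} (x : Fin d → ℤ) (i : Fin d) (s : Fin d → ℝ) :
    ∑ j, s j * (((x + unitv d i) j : ℤ) : ℝ) = (∑ j, s j * (x j : ℝ)) + s i := by
  have : ∀ j : Fin d, s j * (((x + unitv d i) j : ℤ) : ℝ)
      = s j * (x j : ℝ) + (if j = i then s j else 0) := by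
    intro j; simp only [Pi.add_apply, unitv]; split <;> push_cast <;> ring
  rw [Finset.sum_congr rfl fun j _ => this j, Finset.sum_add_distrib,
    Finset.sum_ite_eq' Finset.univ i s]
  simp

lemma sum_minus {d : ℕ} (x : Fin d → ℤ) (i : Fin d) (s : Fin d → ℝ) :
    ∑ j, s j * (((x - unitv d i) j : ℤ) : ℝ) = (∑ j, s j * (x j : ℝ)) - s i := by
  have : ∀ j : Fin d, s j * (((x - unitv d i) j : ℤ) : ℝ)
      = s j * (x j : ℝ) - (if j = i then s j else 0) := by
    intro j; simp only [Pi.sub_apply, unitv]; split <;> push_cast <;> ring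
  rw [Finset.sum_congr rfl fun j _ => this j, Finset.sum_sub_distrib,
    Finset.sum_ite_eq' Finset.univ i s]
  simp

/-- Measure bound on the upper contact set: for a balanced, uniformly elliptic
nearest-neighbor probability kernel `a`, if `L_a u (x) ≥ -g(x)` and `I_u(x) ≠ ∅`, then
`|I_u(x)| ≤ (2/κ)^d g(x)^d`. -/
theorem stmt13 {d : ℕ} (hd : 1 ≤ d) (κ : ℝ) (hκ : 0 < κ)
    (a : (Fin d → ℤ) → (Fin d → ℤ) → ℝ)
    (hnn : ∀ x y, 0 ≤ a x y)
    (hsupp : ∀ x y, 0 < a x y → isNbr x y)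
    (hsum : ∀ x, ∑ i : Fin d, (a x (x + unitv d i) + a x (x - unitv d i)) = 1)
    (hbal : ∀ x i, a x (x + unitv d i) = a x (x - unitv d i))
    (hell : ∀ x y, isNbr x y → κ ≤ a x y)
    (E : Finset (Fin d → ℤ)) (u : (Fin d → ℤ) → ℝ)
    (x : Fin d → ℤ) (hx : x ∈ E)
    (gx : ℝ) (hg : 0 ≤ gx)
    (hne : (contact (↑E ∪ bdry (↑E)) u x).Nonempty)
    (hLa : -gx ≤ La a u x) :
    volume (contact (↑E ∪ bdry (↑E)) u x) ≤ ENNReal.ofReal ((2 / κ) ^ d * gx ^ d) := by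
  set c : Fin d → ℝ := fun i => u (x + unitv d i) - u x with hc
  set t : Fin d → ℝ := fun i => 2 * u x - u (x + unitv d i) - u (x - unitv d i) with ht
  -- membership of neighbors in the closure
  have memp : ∀ i : Fin d, (x + unitv d i) ∈ (↑E ∪ bdry (↑E) : Set (Fin d → ℤ)) := by
    intro i
    by_cases h : x + unitv d i ∈ E
    · exact Or.inl h
    · exact Or.inr ⟨h, x, hx, nbr_plus x i⟩
  have memm : ∀ i : Fin d, (x - unitv d i) ∈ (↑E ∪ bdry (↑E) : Set (Fin d → ℤ)) := by
    intro i
    by_cases h : x - unitv d i ∈ E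
    · exact Or.inl h
    · exact Or.inr ⟨h, x, hx, nbr_minus x i⟩
  -- rewrite La
  have hLa' : La a u x = -∑ i : Fin d, a x (x + unitv d i) * t i := by
    unfold La
    rw [← Finset.sum_neg_distrib]
    refine Finset.sum_congr rfl fun i _ => ?_
    rw [← hbal x i]
    simp only [ht]; ring
  have hsumle : ∑ i : Fin d, a x (x + unitv d i) * t i ≤ gx := by linarith [hLa'.symm ▸ hLa]
  -- the subset
  have hsub : contact (↑E ∪ bdry (↑E)) u x ⊆
      Set.univ.pi (fun i => Set.Icc (c i) (c i + gx / κ)) := by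
    intro s hs
    have hb1 : ∀ i : Fin d, 0 ≤ u x - u (x + unitv d i) + s i := by
      intro i
      have h1 := hs _ (memp i)
      rw [sum_plus] at h1
      linarith
    have hb2 : ∀ i : Fin d, 0 ≤ u x - u (x - unitv d i) - s i := by
      intro i
      have h2 := hs _ (memm i)
      rw [sum_minus] at h2
      linarith
    have htnn : ∀ i : Fin d, 0 ≤ t i := by
      intro i
      have := hb1 i
      have := hb2 i
      simp only [ht]; linarith
    intro i _
    constructor
    · have := hb2 i
      simp only [hc]
      linarith [hb1 i]
    · -- upper bound: t i ≤ gx / κ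
      have hsingle : a x (x + unitv d i) * t i ≤ ∑ j : Fin d, a x (x + unitv d j) * t j :=
        Finset.single_le_sum (f := fun j => a x (x + unitv d j) * t j)
          (fun j _ => mul_nonneg (hnn _ _) (htnn j)) (Finset.mem_univ i)
      have hκa : κ ≤ a x (x + unitv d i) := hell _ _ (nbr_plus x i)
      have hκt : κ * t i ≤ gx := by
        have : κ * t i ≤ a x (x + unitv d i) * t i :=
          mul_le_mul_of_nonneg_right hκa (htnn i)
        linarith
      have hti : t i ≤ gx / κ := by
        rw [le_div_iff₀ hκ]; linarith
      have := hb2 i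
      simp only [hc]
      simp only [ht] at hti
      linarith
  calc volume (contact (↑E ∪ bdry (↑E)) u x)
      ≤ volume (Set.univ.pi (fun i => Set.Icc (c i) (c i + gx / κ))) :=
        measure_mono hsub
    _ = ∏ i : Fin d, volume (Set.Icc (c i) (c i + gx / κ)) := volume_pi_pi _
    _ = ∏ _i : Fin d, ENNReal.ofReal (gx / κ) := by
        refine Finset.prod_congr rfl fun i _ => ?_
        rw [Real.volume_Icc]
        congr 1
        ring
    _ = ENNReal.ofReal (gx / κ) ^ d := by
        rw [Finset.prod_const, Finset.card_univ, Fintype.card_fin]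
    _ ≤ ENNReal.ofReal ((2 / κ) ^ d * gx ^ d) := by
        rw [← ENNReal.ofReal_pow (div_nonneg hg hκ.le)]
        apply ENNReal.ofReal_le_ofReal
        rw [← mul_pow]
        apply pow_le_pow_left₀ (div_nonneg hg hκ.le)
        rw [div_le_iff₀ hκ, mul_comm (2 / κ) gx, mul_assoc, div_mul_cancel₀ _ hκ.ne']
        nlinarith
end

section
/- Let E ⊂ ℤ^d be a finite set and u a function on Ē. Suppose max_E u = u(x₀) > max_{∂E} u for some x₀ ∈ E, and let R = (u(x₀) − max_{∂E} u)/(d·diam Ē) where diam is the ℓ^∞-diameter. Then the cube {s ∈ ℝ^d : |s|_∞ ≤ R} is contained in the union ⋃_{x∈E} I_u(x) of upper contact sets, where I_u(x) = {s ∈ ℝ^d : u(x) − s·x ≥ u(z) − s·z for all z ∈ Ē}. -/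
/-- The `ℓ^∞`-diameter of a finite subset of `ℤ^d`. -/
def ellInfDiam {d : ℕ} (F : Finset (Fin d → ℤ)) : ℕ :=
  (F ×ˢ F).sup fun p => Finset.univ.sup fun j => (p.1 j - p.2 j).natAbs

/-!
Tilt `u` by the linear function `z ↦ s · z` and take a maximiser `y` of `u z - s · z` over the
finite set `Ē`; then `s ∈ I_u(y)`. If `y` lies on `∂E`, then `u y ≤ max_{∂E} u`, while
`|s · (x₀ - y)| ≤ d · |s|_∞ · diam Ē ≤ u(x₀) - max_{∂E} u`, so `x₀ ∈ E` is a maximiser too.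
-/

open Finset

theorem natAbs_sub_le_ellInfDiam {d : ℕ} {F : Finset (Fin d → ℤ)} {x y : Fin d → ℤ}
    (hx : x ∈ F) (hy : y ∈ F) (j : Fin d) : (x j - y j).natAbs ≤ ellInfDiam F :=
  (le_sup (f := fun j => (x j - y j).natAbs) (mem_univ j)).trans
    (le_sup (f := fun p : (Fin d → ℤ) × (Fin d → ℤ) => univ.sup fun j => (p.1 j - p.2 j).natAbs)
      (b := (x, y)) (mem_product.2 ⟨hx, hy⟩))

theorem ellInfDiam_pos {d : ℕ} {F : Finset (Fin d → ℤ)} {x y : Fin d → ℤ}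
    (hx : x ∈ F) (hy : y ∈ F) (hxy : x ≠ y) : 0 < ellInfDiam F := by
  obtain ⟨j, hj⟩ := Function.ne_iff.1 hxy
  have := natAbs_sub_le_ellInfDiam hx hy j
  omega

theorem sum_mul_sub_le_of_abs_le {d : ℕ} {F : Finset (Fin d → ℤ)} {x y : Fin d → ℤ}
    (hx : x ∈ F) (hy : y ∈ F) {s : Fin d → ℝ} {r : ℝ} (hs : ∀ j, |s j| ≤ r) :
    ∑ j, s j * ((x j : ℝ) - y j) ≤ d * r * ellInfDiam F := by
  have hD : ∀ j, |(x j : ℝ) - y j| ≤ ellInfDiam F := fun j => by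
    rw [← Int.cast_sub, ← Int.cast_abs, Int.abs_eq_natAbs]
    exact_mod_cast natAbs_sub_le_ellInfDiam hx hy j
  calc ∑ j, s j * ((x j : ℝ) - y j)
      ≤ ∑ _j : Fin d, r * ellInfDiam F := sum_le_sum fun j _ => by
        calc s j * ((x j : ℝ) - y j) ≤ |s j| * |(x j : ℝ) - y j| := by
              rw [← abs_mul]; exact le_abs_self _
          _ ≤ |s j| * ellInfDiam F := mul_le_mul_of_nonneg_left (hD j) (abs_nonneg _)
          _ ≤ r * ellInfDiam F := mul_le_mul_of_nonneg_right (hs j) (Nat.cast_nonneg _)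
    _ = d * r * ellInfDiam F := by simp [mul_assoc]

theorem sum_mul_sub_le_of_abs_le_div {d : ℕ} {F : Finset (Fin d → ℤ)} {x y : Fin d → ℤ}
    (hx : x ∈ F) (hy : y ∈ F) (hxy : x ≠ y) {s : Fin d → ℝ} {c : ℝ}
    (hs : ∀ j, |s j| ≤ c / (d * ellInfDiam F)) : ∑ j, s j * ((x j : ℝ) - y j) ≤ c := by
  obtain ⟨j, -⟩ := Function.ne_iff.1 hxy
  have hd : (d : ℝ) ≠ 0 := Nat.cast_ne_zero.2 j.pos.ne'
  have hD : (ellInfDiam F : ℝ) ≠ 0 := Nat.cast_ne_zero.2 (ellInfDiam_pos hx hy hxy).ne'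
  calc ∑ j, s j * ((x j : ℝ) - y j) ≤ d * (c / (d * ellInfDiam F)) * ellInfDiam F :=
        sum_mul_sub_le_of_abs_le hx hy hs
    _ = c := by field_simp

theorem mem_biUnion_contact_of_forall_le {d : ℕ} {E F : Finset (Fin d → ℤ)}
    {B : Set (Fin d → ℤ)} (hF : (↑F : Set (Fin d → ℤ)) = ↑E ∪ B) (u : (Fin d → ℤ) → ℝ)
    {x₀ : Fin d → ℤ} (hx₀ : x₀ ∈ E) (s : Fin d → ℝ)
    (hB : ∀ y ∈ B, u y - ∑ j, s j * (y j : ℝ) ≤ u x₀ - ∑ j, s j * (x₀ j : ℝ)) :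
    s ∈ ⋃ x ∈ E, contact (↑F) u x := by
  have hx₀F : x₀ ∈ (↑F : Set (Fin d → ℤ)) := hF ▸ Or.inl hx₀
  obtain ⟨y, hyF, hy⟩ := F.exists_max_image (fun z => u z - ∑ j, s j * (z j : ℝ)) ⟨x₀, hx₀F⟩
  have hmaxy : s ∈ contact (↑F) u y := fun z hz => hy z hz
  rcases (hF ▸ hyF : y ∈ (↑E ∪ B : Set (Fin d → ℤ))) with hyE | hyB
  · exact Set.mem_biUnion hyE hmaxy
  · exact Set.mem_biUnion hx₀ fun z hz => (hmaxy z hz).trans (hB y hyB)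

theorem stmt14_general {d : ℕ}
    (E F bF : Finset (Fin d → ℤ))
    (hF : (↑F : Set (Fin d → ℤ)) = ↑E ∪ bdry (↑E))
    (hbF : (↑bF : Set (Fin d → ℤ)) = bdry (↑E))
    (hbne : bF.Nonempty)
    (u : (Fin d → ℤ) → ℝ) (x₀ : Fin d → ℤ) (hx₀ : x₀ ∈ E) :
    {s : Fin d → ℝ |
        ∀ j, |s j| ≤ (u x₀ - bF.sup' hbne u) / (d * (ellInfDiam F : ℝ))} ⊆
      ⋃ x ∈ E, contact (↑F) u x := by
  intro s hs
  refine mem_biUnion_contact_of_forall_le hF u hx₀ s fun y hy => ?_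
  have hyb : y ∈ bF := by rw [← mem_coe, hbF]; exact hy
  have hF_of_mem {z} (hz : z ∈ (↑E ∪ bdry ↑E : Set (Fin d → ℤ))) : z ∈ F := by
    rw [← mem_coe, hF]; exact hz
  have htilt := sum_mul_sub_le_of_abs_le_div (hF_of_mem (Or.inl hx₀)) (hF_of_mem (Or.inr hy))
    (fun h => hy.1 (h ▸ hx₀)) hs
  have huy : u y ≤ bF.sup' hbne u := le_sup' u hyb
  simp only [mul_sub, sum_sub_distrib] at htilt
  linarith

/-- If `u` attains over `Ē = E ∪ ∂E` a maximum `u(x₀)`, `x₀ ∈ E`, exceeding its maximum `M`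
over `∂E`, then the cube `{|s|_∞ ≤ R}` with `R = (u(x₀) - M)/(d · diam Ē)` is contained in
the union of the upper contact sets `⋃_{x ∈ E} I_u(x)`. -/
theorem stmt14 {d : ℕ} (hd : 1 ≤ d)
    (E F bF : Finset (Fin d → ℤ))
    (hF : (↑F : Set (Fin d → ℤ)) = ↑E ∪ bdry (↑E))
    (hbF : (↑bF : Set (Fin d → ℤ)) = bdry (↑E))
    (hbne : bF.Nonempty)
    (u : (Fin d → ℤ) → ℝ) (x₀ : Fin d → ℤ) (hx₀ : x₀ ∈ E)
    (hmax : ∀ x ∈ E, u x ≤ u x₀)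
    (hstrict : bF.sup' hbne u < u x₀) :
    {s : Fin d → ℝ |
        ∀ j, |s j| ≤ (u x₀ - bF.sup' hbne u) / (d * (ellInfDiam F : ℝ))} ⊆
      ⋃ x ∈ E, contact (↑F) u x :=
  stmt14_general E F bF hF hbF hbne u x₀ hx₀
end

section
/- Let η(x) = (1 − |x|²/R²)^β for |x| < R and η(x) = 0 otherwise, where β ≥ 2 and R > 0. Then for x, y ∈ ℝ^d with |x| < R and R² − |x|² ≥ 4R|x−y|: (a) 2^{−β} ≤ η(y)/η(x) ≤ 2^β; (b) |η(x) − η(y)| ≤ β·2^β·R^{−1}·η(x)^{1−1/β}·|x−y|; (c) |η(x) − η(y) − ∇η(x)·(x−y)| ≤ β(β−1)·2^β·R^{−2}·η(x)^{1−2/β}·|x−y|², where ∇η(x) = −2βxR^{−2}η(x)^{1−1/β}. -/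
/-!
Write `a = 1 - ‖x‖²/R²`, `b = 1 - ‖y‖²/R²` and `δ = ‖x - y‖/R`, so that `η x = a^β` and
`η y = b^β`. The hypothesis says `4δ ≤ a`, and `|b - a| ≤ 2δ`, so `a/2 ≤ b ≤ 2a`, which is (a).
Since `2⟪x, x - y⟫/R² = b - a + δ²`, parts (b) and (c) are the first- and second-order Taylor
estimates for `t ↦ t^β` on `[0, 2a]`, with `|b - a|` traded for `2δ`.
-/

lemma abs_rpow_sub_rpow_le {β M u v : ℝ} (hβ : 1 ≤ β) (hu : 0 ≤ u) (hv : 0 ≤ v)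
    (huM : u ≤ M) (hvM : v ≤ M) : |v ^ β - u ^ β| ≤ β * M ^ (β - 1) * |v - u| := by
  have hderiv : ∀ t ∈ Set.uIcc u v,
      HasDerivWithinAt (fun s : ℝ => s ^ β) (β * t ^ (β - 1)) (Set.uIcc u v) t :=
    fun t _ => (Real.hasDerivAt_rpow_const (Or.inr hβ)).hasDerivWithinAt
  have hbound : ∀ t ∈ Set.uIcc u v, ‖β * t ^ (β - 1)‖ ≤ β * M ^ (β - 1) := by
    rintro t ⟨hut, htv⟩
    have ht0 : 0 ≤ t := (le_min hu hv).trans hut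
    rw [Real.norm_of_nonneg (by positivity)]
    gcongr
    exact htv.trans (max_le huM hvM)
  simpa [Real.norm_eq_abs] using (convex_uIcc u v).norm_image_sub_le_of_norm_hasDerivWithin_le
    hderiv hbound Set.left_mem_uIcc Set.right_mem_uIcc

lemma abs_rpow_sub_rpow_sub_mul_le {β M u v : ℝ} (hβ : 2 ≤ β) (hu : 0 ≤ u) (hv : 0 ≤ v)
    (huM : u ≤ M) (hvM : v ≤ M) :
    |v ^ β - u ^ β - β * u ^ (β - 1) * (v - u)| ≤ β * (β - 1) * M ^ (β - 2) / 2 * (v - u) ^ 2 := by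
  rcases eq_or_ne u v with rfl | huv
  · simp
  have hC2 : ContDiff ℝ 2 (fun t : ℝ => t ^ β) :=
    Real.contDiff_rpow_const_of_le (by exact_mod_cast hβ)
  obtain ⟨ξ, hξ, hrem⟩ := taylor_mean_remainder_lagrange_iteratedDeriv (n := 1) huv hC2.contDiffOn
  have hfirst : iteratedDerivWithin 1 (fun t : ℝ => t ^ β) (Set.uIcc u v) u = β * u ^ (β - 1) := by
    rw [iteratedDerivWithin_one]
    exact (Real.hasDerivAt_rpow_const (Or.inr (by linarith))).hasDerivWithinAt.derivWithin
      (uniqueDiffOn_uIcc huv u Set.left_mem_uIcc)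
  have hsecond : iteratedDeriv 2 (fun t : ℝ => t ^ β) ξ = β * (β - 1) * ξ ^ (β - 2) := by
    rw [iteratedDeriv_eq_iterate, Real.iter_deriv_rpow_const]
    simp [descPochhammer_succ_right]
  have hξ0 : 0 ≤ ξ := le_trans (le_min hu hv) (Set.uIoo_subset_uIcc_self hξ).1
  have hξM : ξ ≤ M := le_trans (Set.uIoo_subset_uIcc_self hξ).2 (max_le huM hvM)
  rw [taylor_within_apply, Finset.sum_range_succ, Finset.sum_range_one, hsecond, hfirst] at hrem
  simp only [iteratedDerivWithin_zero, Nat.factorial, smul_eq_mul] at hrem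
  norm_num at hrem
  rw [show v ^ β - u ^ β - β * u ^ (β - 1) * (v - u) = β * (β - 1) * ξ ^ (β - 2) / 2 * (v - u) ^ 2 by
    linear_combination hrem]
  have hc : 0 ≤ β * (β - 1) := mul_nonneg (by linarith) (by linarith)
  rw [abs_of_nonneg (by have := Real.rpow_nonneg hξ0 (β - 2); positivity)]
  gcongr

lemma rpow_rpow_one_sub_div {a β : ℝ} (ha : 0 ≤ a) (hβ : β ≠ 0) (k : ℝ) :
    (a ^ β) ^ (1 - k / β) = a ^ (β - k) := by
  rw [← Real.rpow_mul ha]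
  congr 1
  field_simp

section Comparable

variable {β a b δ : ℝ}

lemma rpow_div_rpow_mem_Icc (hβ : 0 ≤ β) (ha : 0 < a) (hab : a ≤ 2 * b) (hba : b ≤ 2 * a) :
    b ^ β / a ^ β ∈ Set.Icc ((2 : ℝ) ^ (-β)) (2 ^ β) := by
  have hb : 0 ≤ b := by linarith
  rw [← Real.div_rpow hb ha.le, Real.rpow_neg zero_le_two, ← Real.inv_rpow zero_le_two]
  constructor
  · gcongr
    rw [le_div_iff₀ ha]
    linarith
  · gcongr
    rw [div_le_iff₀ ha]
    linarith

lemma abs_rpow_sub_rpow_le_of_abs_sub_le (hβ : 1 ≤ β) (ha : 0 ≤ a) (hb : 0 ≤ b)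
    (hba : b ≤ 2 * a) (hδ : |b - a| ≤ 2 * δ) :
    |a ^ β - b ^ β| ≤ β * 2 ^ β * a ^ (β - 1) * δ := by
  calc |a ^ β - b ^ β| = |b ^ β - a ^ β| := abs_sub_comm _ _
    _ ≤ β * (2 * a) ^ (β - 1) * |b - a| := abs_rpow_sub_rpow_le hβ ha hb (by linarith) hba
    _ ≤ β * (2 * a) ^ (β - 1) * (2 * δ) := by gcongr
    _ = β * 2 ^ β * a ^ (β - 1) * δ := by
      rw [Real.mul_rpow zero_le_two ha, Real.rpow_sub_one two_ne_zero]
      ring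

lemma abs_rpow_sub_rpow_add_le_of_abs_sub_le (hβ : 2 ≤ β) (ha : 0 < a) (ha1 : a ≤ 1)
    (hb : 0 ≤ b) (hba : b ≤ 2 * a) (hδ : |b - a| ≤ 2 * δ) :
    |a ^ β - b ^ β + β * a ^ (β - 1) * (b - a + δ ^ 2)|
      ≤ β * (β - 1) * 2 ^ β * a ^ (β - 2) * δ ^ 2 := by
  have hβ1 : 1 ≤ β - 1 := by linarith
  have hsq : (b - a) ^ 2 ≤ 4 * δ ^ 2 := by nlinarith [abs_nonneg (b - a), sq_abs (b - a)]
  have hpow : a ^ (β - 1) ≤ a ^ (β - 2) := Real.rpow_le_rpow_of_exponent_ge ha ha1 (by linarith)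
  have hapos : 0 ≤ a ^ (β - 2) := by positivity
  set e : ℝ := 2 ^ (β - 2) with he
  have he1 : 1 ≤ e := Real.one_le_rpow one_le_two (by linarith)
  have h2β : (2 : ℝ) ^ β = 4 * e := by
    rw [he, Real.rpow_sub two_pos, Real.rpow_two]
    ring
  calc |a ^ β - b ^ β + β * a ^ (β - 1) * (b - a + δ ^ 2)|
      = |-(b ^ β - a ^ β - β * a ^ (β - 1) * (b - a)) + β * a ^ (β - 1) * δ ^ 2| := by ring_nf
    _ ≤ |b ^ β - a ^ β - β * a ^ (β - 1) * (b - a)| + β * a ^ (β - 1) * δ ^ 2 := by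
      refine (abs_add_le _ _).trans_eq ?_
      rw [abs_neg, abs_of_nonneg (a := β * a ^ (β - 1) * δ ^ 2) (by positivity)]
    _ ≤ β * (β - 1) * (2 * a) ^ (β - 2) / 2 * (b - a) ^ 2 + β * a ^ (β - 2) * δ ^ 2 := by
      gcongr
      exact abs_rpow_sub_rpow_sub_mul_le hβ ha.le hb (by linarith) hba
    _ ≤ β * (β - 1) * (e * a ^ (β - 2)) / 2 * (4 * δ ^ 2) + β * a ^ (β - 2) * δ ^ 2 := by
      rw [Real.mul_rpow zero_le_two ha.le]
      gcongr
    _ ≤ β * (β - 1) * 2 ^ β * a ^ (β - 2) * δ ^ 2 := by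
      rw [h2β]
      have hw : 0 ≤ β * a ^ (β - 2) * δ ^ 2 := by positivity
      nlinarith [mul_nonneg hw (show 0 ≤ 2 * (β - 1) * e - 1 by nlinarith)]

end Comparable

noncomputable def cutoffBase {E : Type*} [Norm E] (R : ℝ) (z : E) : ℝ := 1 - ‖z‖ ^ 2 / R ^ 2

section Geometry

variable {E : Type*} [NormedAddCommGroup E] {R : ℝ} {x y : E}

lemma cutoffBase_pos (hx : ‖x‖ < R) : 0 < cutoffBase R x := by
  have hR : 0 < R := (norm_nonneg x).trans_lt hx
  rw [cutoffBase, sub_pos, div_lt_one (by positivity)]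
  exact pow_lt_pow_left₀ hx (norm_nonneg x) two_ne_zero

lemma cutoffBase_le_one : cutoffBase R x ≤ 1 := by
  rw [cutoffBase]
  have : 0 ≤ ‖x‖ ^ 2 / R ^ 2 := by positivity
  linarith

lemma norm_lt_of_four_mul_norm_sub_le (hx : ‖x‖ < R)
    (hxy : 4 * R * ‖x - y‖ ≤ R ^ 2 - ‖x‖ ^ 2) : ‖y‖ < R := by
  have hx0 := norm_nonneg x
  have hxy' : ‖x - y‖ < R - ‖x‖ := by nlinarith
  linarith [norm_le_norm_add_norm_sub' y x, norm_sub_rev x y]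

lemma four_mul_div_le_cutoffBase (hR : 0 < R) (hxy : 4 * R * ‖x - y‖ ≤ R ^ 2 - ‖x‖ ^ 2) :
    4 * (‖x - y‖ / R) ≤ cutoffBase R x := by
  rw [cutoffBase, one_sub_div (by positivity), mul_div_assoc', div_le_div_iff₀ hR (by positivity)]
  nlinarith

lemma abs_cutoffBase_sub_le (hR : 0 < R) (hx : ‖x‖ ≤ R) (hy : ‖y‖ ≤ R) :
    |cutoffBase R y - cutoffBase R x| ≤ 2 * (‖x - y‖ / R) := by
  have hdiff : cutoffBase R y - cutoffBase R x = (‖x‖ - ‖y‖) * (‖x‖ + ‖y‖) / R ^ 2 := by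
    rw [cutoffBase, cutoffBase]; ring
  rw [hdiff, abs_div, abs_mul, abs_of_nonneg (by positivity : 0 ≤ ‖x‖ + ‖y‖),
    abs_of_pos (by positivity : 0 < R ^ 2), div_le_iff₀ (by positivity)]
  calc |‖x‖ - ‖y‖| * (‖x‖ + ‖y‖) ≤ ‖x - y‖ * (2 * R) := by
        gcongr
        · exact abs_norm_sub_norm_le x y
        · linarith
    _ = 2 * (‖x - y‖ / R) * R ^ 2 := by field_simp

end Geometry

lemma two_mul_inner_div_eq_cutoffBase_sub {E : Type*} [NormedAddCommGroup E]
    [InnerProductSpace ℝ E] {R : ℝ} (hR : R ≠ 0) (x y : E) :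
    2 * inner ℝ x (x - y) / R ^ 2 = cutoffBase R y - cutoffBase R x + (‖x - y‖ / R) ^ 2 := by
  have h := norm_sub_sq_real x (x - y)
  rw [sub_sub_cancel] at h
  rw [cutoffBase, cutoffBase]
  field_simp
  linarith

/-- Estimates for the cutoff function `η(x) = (1 - |x|²/R²)^β 1_{|x|<R}` with `β ≥ 2`:
for `|x| < R` and `R² - |x|² ≥ 4R|x-y|`,
(a) `2^{-β} ≤ η(y)/η(x) ≤ 2^β`;
(b) `|η(x) - η(y)| ≤ β 2^β R⁻¹ η(x)^{1-1/β} |x-y|`;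
(c) `|η(x) - η(y) - ∇η(x)·(x-y)| ≤ β(β-1) 2^β R⁻² η(x)^{1-2/β} |x-y|²`,
where `∇η(x) = -2βx R⁻² η(x)^{1-1/β}`. -/
theorem stmt17 (d : ℕ) (R β : ℝ) (hR : 0 < R) (hβ : 2 ≤ β)
    (η : EuclideanSpace ℝ (Fin d) → ℝ)
    (hη : ∀ z, η z = if ‖z‖ < R then (1 - ‖z‖ ^ 2 / R ^ 2) ^ β else 0)
    (x y : EuclideanSpace ℝ (Fin d))
    (hx : ‖x‖ < R) (hxy : 4 * R * ‖x - y‖ ≤ R ^ 2 - ‖x‖ ^ 2) :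
    ((2 : ℝ) ^ (-β) ≤ η y / η x ∧ η y / η x ≤ (2 : ℝ) ^ β) ∧
      |η x - η y| ≤ β * (2 : ℝ) ^ β * R⁻¹ * (η x) ^ (1 - 1 / β) * ‖x - y‖ ∧
      |η x - η y -
          (inner ℝ (((-2) * β * (R ^ 2)⁻¹ * (η x) ^ (1 - 1 / β)) • x) (x - y) : ℝ)|
        ≤ β * (β - 1) * (2 : ℝ) ^ β * (R ^ 2)⁻¹ * (η x) ^ (1 - 2 / β) * ‖x - y‖ ^ 2 := by
  have hy : ‖y‖ < R := norm_lt_of_four_mul_norm_sub_le hx hxy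
  have ha : 0 < cutoffBase R x := cutoffBase_pos hx
  have hb : 0 < cutoffBase R y := cutoffBase_pos hy
  have hab : |cutoffBase R y - cutoffBase R x| ≤ 2 * (‖x - y‖ / R) :=
    abs_cutoffBase_sub_le hR hx.le hy.le
  have hδ : 4 * (‖x - y‖ / R) ≤ cutoffBase R x := four_mul_div_le_cutoffBase hR hxy
  have hηx : η x = cutoffBase R x ^ β := by rw [hη, if_pos hx, cutoffBase]
  have hηy : η y = cutoffBase R y ^ β := by rw [hη, if_pos hy, cutoffBase]
  have hinner := two_mul_inner_div_eq_cutoffBase_sub hR.ne' x y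
  set a := cutoffBase R x
  set b := cutoffBase R y
  set δ := ‖x - y‖ / R
  obtain ⟨hba₁, hba₂⟩ := abs_le.mp hab
  have hβ0 : β ≠ 0 := by positivity
  rw [real_inner_smul_left, hηx, hηy, rpow_rpow_one_sub_div ha.le hβ0,
    rpow_rpow_one_sub_div ha.le hβ0]
  refine ⟨rpow_div_rpow_mem_Icc (by linarith) ha (by linarith) (by linarith), ?_, ?_⟩
  · calc |a ^ β - b ^ β| ≤ β * 2 ^ β * a ^ (β - 1) * δ :=
          abs_rpow_sub_rpow_le_of_abs_sub_le (by linarith) ha.le hb.le (by linarith) hab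
      _ = _ := by ring
  · have hrw : -2 * β * (R ^ 2)⁻¹ * a ^ (β - 1) * inner ℝ x (x - y)
        = -(β * a ^ (β - 1) * (b - a + δ ^ 2)) := by
      rw [← hinner]; ring
    rw [hrw, sub_neg_eq_add]
    calc _ ≤ β * (β - 1) * 2 ^ β * a ^ (β - 2) * δ ^ 2 :=
          abs_rpow_sub_rpow_add_le_of_abs_sub_le hβ ha cutoffBase_le_one hb.le (by linarith) hab
      _ = _ := by ring
end

section
/- Let (q_n)_{n≥1} be a sequence in (0,1] and suppose there exist positive constants (c_m)_{m≥1} with c_m ≤ C_d·m^{d−1} such that c_{m∧n}^{−1}·q_m·q_n/(2d) ≤ q_{m+n} ≤ c_{m∧n}·q_m·q_n for all m,n ≥ 1. Then φ := −lim_{k→∞}(1/k)log q_k exists (as a real number), and for all k ≥ 1: q_k ≥ exp(−kφ)/(C_d·(2k)^{d−1}) and q_k ≤ 2d·C_d·(2k)^{d−1}·exp(−kφ). -/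
/-!
Set `b_k = log (q_k W_k)` and `a_k = log (2d W_k / q_k)` with `W_k = C_d (2k)^{d-1}`. Since
`(m ∧ n) · 2(m+n) ≤ 2m · 2n`, the two-sided comparison of `q_{m+n}` with `q_m q_n` makes both
sequences subadditive, and `a_k + b_k = log (2d W_k²) = o(k)`. Fekete's lemma gives
`a_k / k → φ` and `b_k / k → -φ`, and since a subadditive sequence satisfies `lim ≤ u_k / k`
for every `k`, the bounds `k φ ≤ a_k` and `-k φ ≤ b_k` hold for all `k`, not just
asymptotically.
-/

open Filter Topology Set

namespace Subadditive

variable {a b : ℕ → ℝ}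

theorem apply_le_mul_apply_one (hb : Subadditive b) {n : ℕ} (hn : 0 < n) : b n ≤ n * b 1 := by
  obtain ⟨k, rfl⟩ := Nat.exists_eq_succ_of_ne_zero hn.ne'
  have h := hb.apply_mul_add_le k 1 1
  rw [mul_one] at h
  push_cast
  linarith

theorem bddBelow_range_div_of_tendsto_add (hb : Subadditive b)
    (hab : Tendsto (fun n : ℕ => (a n + b n) / n) atTop (𝓝 0)) :
    BddBelow (range fun n : ℕ => a n / n) := by
  obtain ⟨M, hM⟩ := hab.bddBelow_range
  refine ⟨min 0 (M - b 1), ?_⟩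
  rintro _ ⟨n, rfl⟩
  rcases Nat.eq_zero_or_pos n with rfl | hn
  · simp
  have hn' : (0 : ℝ) < n := by exact_mod_cast hn
  have hbn : b n / n ≤ b 1 := (div_le_iff₀' hn').2 (hb.apply_le_mul_apply_one hn)
  calc min 0 (M - b 1) ≤ M - b 1 := min_le_right _ _
    _ ≤ (a n + b n) / n - b n / n := sub_le_sub (hM ⟨n, rfl⟩) hbn
    _ = a n / n := by ring

theorem exists_tendsto_of_tendsto_add (ha : Subadditive a) (hb : Subadditive b)
    (hab : Tendsto (fun n : ℕ => (a n + b n) / n) atTop (𝓝 0)) :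
    ∃ L : ℝ, Tendsto (fun n : ℕ => a n / n) atTop (𝓝 L) ∧
      ∀ n : ℕ, 0 < n → n * L ≤ a n ∧ -(n * L) ≤ b n := by
  have hba : Tendsto (fun n : ℕ => (b n + a n) / n) atTop (𝓝 0) := by
    simpa only [add_comm] using hab
  have hbdda := hb.bddBelow_range_div_of_tendsto_add hab
  have hbddb := ha.bddBelow_range_div_of_tendsto_add hba
  have hlim : ha.lim + hb.lim = 0 :=
    tendsto_nhds_unique ((ha.tendsto_lim hbdda).add (hb.tendsto_lim hbddb))
      (by simpa only [add_div] using hab)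
  refine ⟨ha.lim, ha.tendsto_lim hbdda, fun n hn => ⟨?_, ?_⟩⟩
  · have h := ha.lim_le_div hbdda hn.ne'
    rwa [le_div_iff₀ (by exact_mod_cast hn), mul_comm] at h
  · have h := hb.lim_le_div hbddb hn.ne'
    rw [le_div_iff₀ (by exact_mod_cast hn)] at h
    nlinarith

end Subadditive

-- `Subadditive` also constrains index `0`, where `v` need not be positive; hence the patch there.
theorem subadditive_log_of_submultiplicative {v : ℕ → ℝ} (hv : ∀ n, 0 < n → 0 < v n)
    (h : ∀ m n, 0 < m → 0 < n → v (m + n) ≤ v m * v n) :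
    Subadditive fun n => if n = 0 then 0 else Real.log (v n) := by
  intro m n
  rcases Nat.eq_zero_or_pos m with rfl | hm
  · simp
  rcases Nat.eq_zero_or_pos n with rfl | hn
  · simp
  simp only [hm.ne', hn.ne', (Nat.add_pos_left hm n).ne', if_false]
  rw [← Real.log_mul (hv m hm).ne' (hv n hn).ne']
  exact Real.log_le_log (hv _ (Nat.add_pos_left hm n)) (h m n hm hn)

theorem tendsto_log_mul_pow_div_atTop {C r : ℝ} (hC : 0 < C) (hr : 0 < r) (k : ℕ) :
    Tendsto (fun n : ℕ => Real.log (C * (r * n) ^ k) / n) atTop (𝓝 0) := by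
  have hlog : Tendsto (fun n : ℕ => Real.log n / n) atTop (𝓝 0) := by
    simpa [Function.comp_def] using
      (Real.tendsto_pow_log_div_mul_add_atTop 1 0 1 one_ne_zero).comp
      tendsto_natCast_atTop_atTop
  have h := (tendsto_const_div_atTop_nhds_zero_nat (Real.log C + k * Real.log r)).add
    (hlog.const_mul (k : ℝ))
  rw [zero_add, mul_zero] at h
  refine h.congr' ?_
  filter_upwards [eventually_gt_atTop 0] with n hn
  have hn' : (0 : ℝ) < n := by exact_mod_cast hn
  rw [Real.log_mul hC.ne' (by positivity), Real.log_pow, Real.log_mul hr.ne' hn'.ne']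
  ring

theorem mul_two_mul_add_pow_le {C c : ℝ} {k m n : ℕ} (hC : 0 ≤ C)
    (hc : c ≤ C * ((min m n : ℕ) : ℝ) ^ k) :
    c * (C * (2 * ((m + n : ℕ) : ℝ)) ^ k) ≤ C * (2 * (m : ℝ)) ^ k * (C * (2 * (n : ℝ)) ^ k) := by
  have hmin : ((min m n : ℕ) : ℝ) * (2 * ((m + n : ℕ) : ℝ)) ≤ 2 * m * (2 * n) := by
    push_cast
    rcases le_total (m : ℝ) n with h | h
    · rw [min_eq_left h]; nlinarith [m.cast_nonneg (α := ℝ)]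
    · rw [min_eq_right h]; nlinarith [n.cast_nonneg (α := ℝ)]
  calc c * (C * (2 * ((m + n : ℕ) : ℝ)) ^ k)
      ≤ C * ((min m n : ℕ) : ℝ) ^ k * (C * (2 * ((m + n : ℕ) : ℝ)) ^ k) := by gcongr
    _ = C * C * (((min m n : ℕ) : ℝ) * (2 * ((m + n : ℕ) : ℝ))) ^ k := by ring
    _ ≤ C * C * (2 * m * (2 * n)) ^ k := by gcongr
    _ = C * (2 * (m : ℝ)) ^ k * (C * (2 * (n : ℝ)) ^ k) := by rw [mul_pow]; ring

theorem exists_tendsto_neg_log_div_of_almost_multiplicative {q W V : ℕ → ℝ}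
    (hq : ∀ n, 0 < n → 0 < q n) (hW : ∀ n, 0 < n → 0 < W n) (hV : ∀ n, 0 < n → 0 < V n)
    (hWlog : Tendsto (fun n : ℕ => Real.log (W n) / n) atTop (𝓝 0))
    (hVlog : Tendsto (fun n : ℕ => Real.log (V n) / n) atTop (𝓝 0))
    (hupper : ∀ m n, 0 < m → 0 < n → q (m + n) * W (m + n) ≤ q m * W m * (q n * W n))
    (hlower : ∀ m n, 0 < m → 0 < n → q m * q n * V (m + n) ≤ V m * V n * q (m + n)) :
    ∃ φ : ℝ, Tendsto (fun n : ℕ => -Real.log (q n) / n) atTop (𝓝 φ) ∧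
      ∀ n : ℕ, 0 < n →
        Real.exp (-(n : ℝ) * φ) / W n ≤ q n ∧ q n ≤ V n * Real.exp (-(n : ℝ) * φ) := by
  set a : ℕ → ℝ := fun n => if n = 0 then 0 else Real.log (V n / q n)
  set b : ℕ → ℝ := fun n => if n = 0 then 0 else Real.log (q n * W n)
  have ha : Subadditive a := subadditive_log_of_submultiplicative
    (fun n hn => div_pos (hV n hn) (hq n hn)) fun m n hm hn => by
      rw [div_mul_div_comm, div_le_div_iff₀ (hq _ (Nat.add_pos_left hm n))
        (mul_pos (hq m hm) (hq n hn))]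
      linarith [hlower m n hm hn]
  have hb : Subadditive b := subadditive_log_of_submultiplicative
    (fun n hn => mul_pos (hq n hn) (hW n hn)) hupper
  have hab : Tendsto (fun n : ℕ => (a n + b n) / n) atTop (𝓝 0) := by
    refine (zero_add (0 : ℝ) ▸ hVlog.add hWlog).congr' ?_
    filter_upwards [eventually_gt_atTop 0] with n hn
    simp only [a, b, hn.ne', if_false]
    rw [Real.log_div (hV n hn).ne' (hq n hn).ne', Real.log_mul (hq n hn).ne' (hW n hn).ne']
    ring
  obtain ⟨φ, hφ, hbounds⟩ := ha.exists_tendsto_of_tendsto_add hb hab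
  refine ⟨φ, ?_, fun n hn => ?_⟩
  · refine (sub_zero φ ▸ hφ.sub hVlog).congr' ?_
    filter_upwards [eventually_gt_atTop 0] with n hn
    simp only [a, hn.ne', if_false]
    rw [Real.log_div (hV n hn).ne' (hq n hn).ne']
    ring
  obtain ⟨hφa, hφb⟩ := hbounds n hn
  simp only [a, b, hn.ne', if_false] at hφa hφb
  rw [Real.le_log_iff_exp_le (div_pos (hV n hn) (hq n hn)), le_div_iff₀ (hq n hn)] at hφa
  rw [Real.le_log_iff_exp_le (mul_pos (hq n hn) (hW n hn))] at hφb
  constructor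
  · rw [div_le_iff₀ (hW n hn), neg_mul]
    exact hφb
  · rw [neg_mul, Real.exp_neg, ← div_eq_mul_inv, le_div_iff₀ (Real.exp_pos _), mul_comm]
    exact hφa

theorem exists_tendsto_neg_log_div_of_comparable {q W : ℕ → ℝ} {c : ℕ → ℕ → ℝ} {K : ℝ}
    (hK : 0 < K) (hq : ∀ n, 0 < n → 0 < q n) (hW : ∀ n, 0 < n → 0 < W n)
    (hWlog : Tendsto (fun n : ℕ => Real.log (W n) / n) atTop (𝓝 0))
    (hc : ∀ m n, 0 < m → 0 < n → 0 < c m n)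
    (hcW : ∀ m n, 0 < m → 0 < n → c m n * W (m + n) ≤ W m * W n)
    (hlow : ∀ m n, 0 < m → 0 < n → q m * q n / (K * c m n) ≤ q (m + n))
    (hup : ∀ m n, 0 < m → 0 < n → q (m + n) ≤ c m n * q m * q n) :
    ∃ φ : ℝ, Tendsto (fun n : ℕ => -Real.log (q n) / n) atTop (𝓝 φ) ∧
      ∀ n : ℕ, 0 < n →
        Real.exp (-(n : ℝ) * φ) / W n ≤ q n ∧ q n ≤ K * W n * Real.exp (-(n : ℝ) * φ) := by
  have hKWlog : Tendsto (fun n : ℕ => Real.log (K * W n) / n) atTop (𝓝 0) := by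
    refine (zero_add (0 : ℝ) ▸ (tendsto_const_div_atTop_nhds_zero_nat (Real.log K)).add
      hWlog).congr' ?_
    filter_upwards [eventually_gt_atTop 0] with n hn
    rw [Real.log_mul hK.ne' (hW n hn).ne', add_div]
  refine exists_tendsto_neg_log_div_of_almost_multiplicative hq hW
    (fun n hn => mul_pos hK (hW n hn)) hWlog hKWlog (fun m n hm hn => ?_) (fun m n hm hn => ?_)
  · calc q (m + n) * W (m + n) ≤ c m n * q m * q n * W (m + n) := by
          gcongr
          exacts [(hW _ (Nat.add_pos_left hm n)).le, hup m n hm hn]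
      _ = q m * q n * (c m n * W (m + n)) := by ring
      _ ≤ q m * q n * (W m * W n) :=
          mul_le_mul_of_nonneg_left (hcW m n hm hn) (mul_pos (hq m hm) (hq n hn)).le
      _ = q m * W m * (q n * W n) := by ring
  · have hlow' := (div_le_iff₀ (mul_pos hK (hc m n hm hn))).1 (hlow m n hm hn)
    calc q m * q n * (K * W (m + n)) ≤ q (m + n) * (K * c m n) * (K * W (m + n)) := by
          gcongr
          exact (mul_pos hK (hW _ (Nat.add_pos_left hm n))).le
      _ = K ^ 2 * q (m + n) * (c m n * W (m + n)) := by ring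
      _ ≤ K ^ 2 * q (m + n) * (W m * W n) := mul_le_mul_of_nonneg_left (hcW m n hm hn)
          (mul_pos (pow_pos hK 2) (hq _ (Nat.add_pos_left hm n))).le
      _ = K * W m * (K * W n) * q (m + n) := by ring

/-- Subadditivity framework for percolation connection probabilities: if
`q_{m+n}` is comparable to `q_m q_n` up to polynomially bounded factors
`c_{m∧n} ≤ C_d m^{d-1}` (lower bound with an extra factor `1/(2d)`), then
`φ = -lim (1/k) log q_k` exists and
`exp(-kφ)/(C_d (2k)^{d-1}) ≤ q_k ≤ 2d C_d (2k)^{d-1} exp(-kφ)` for all `k ≥ 1`. -/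
theorem stmt18 (d : ℕ) (hd : 1 ≤ d) (Cd : ℝ) (hCd : 0 < Cd)
    (q : ℕ → ℝ) (hq : ∀ n, 1 ≤ n → 0 < q n ∧ q n ≤ 1)
    (c : ℕ → ℝ) (hc : ∀ m, 1 ≤ m → 0 < c m ∧ c m ≤ Cd * (m : ℝ) ^ (d - 1))
    (hlow : ∀ m n, 1 ≤ m → 1 ≤ n →
      q m * q n / (2 * d * c (min m n)) ≤ q (m + n))
    (hup : ∀ m n, 1 ≤ m → 1 ≤ n → q (m + n) ≤ c (min m n) * q m * q n) :
    ∃ φ : ℝ,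
      Tendsto (fun k : ℕ => -Real.log (q k) / k) atTop (nhds φ) ∧
      ∀ k : ℕ, 1 ≤ k →
        Real.exp (-(k : ℝ) * φ) / (Cd * (2 * (k : ℝ)) ^ (d - 1)) ≤ q k ∧
        q k ≤ 2 * d * Cd * (2 * (k : ℝ)) ^ (d - 1) * Real.exp (-(k : ℝ) * φ) := by
  obtain ⟨φ, hφ, hbounds⟩ := exists_tendsto_neg_log_div_of_comparable
    (W := fun k => Cd * (2 * (k : ℝ)) ^ (d - 1)) (c := fun m n => c (min m n)) (K := 2 * d)
    (by positivity) (fun n hn => (hq n hn).1) (fun n hn => by positivity)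
    (tendsto_log_mul_pow_div_atTop hCd two_pos _) (fun m n hm hn => (hc _ (le_min hm hn)).1)
    (fun m n hm hn => mul_two_mul_add_pow_le hCd.le (hc _ (le_min hm hn)).2) hlow hup
  refine ⟨φ, hφ, fun k hk => ?_⟩
  simpa only [mul_assoc] using hbounds k hk
end
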